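/- arXiv:1905.09997 — 6 statements merged into one kernel-verified Lean document; each statement's English description precedes it below -/
import Mathlib

section
/- Let f_i : R^d → R be μ_i-strongly convex (possibly μ_i = 0, i.e., convex) and suppose w* minimizes f_i (interpolation: f_i(w*) ≤ f_i(w) for all w). Consider one step w⁺ = w - η∇f_i(w) where η > 0 satisfies the Armijo condition f_i(w⁺) ≤ f_i(w) - c·η·‖∇f_i(w)‖² with c ≥ 1/2. Then ‖w⁺ - w*‖² ≤ (1 - μ_i·η)·‖w - w*‖². -/
open scoped RealInnerProductSpace

/-! Expanding the square, `‖w⁺ - w*‖² = ‖w - w*‖² - 2η⟪g, w - w*⟫ + η²‖g‖²`. Strong convexity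
between `w` and `w*` bounds the cross term below by `f w - f w* + (μ/2)‖w - w*‖²`, and the Armijo
condition together with `f w* ≤ f w⁺` gives `f w - f w* ≥ cη‖g‖² ≥ (η/2)‖g‖²`, which absorbs the
`η²‖g‖²` term exactly because `c ≥ 1/2`. -/

section

variable {E : Type*} [NormedAddCommGroup E] [InnerProductSpace ℝ E]

theorem norm_sub_smul_sub_sq (w v z : E) (η : ℝ) :
    ‖(w - η • v) - z‖ ^ 2 = ‖w - z‖ ^ 2 - 2 * η * ⟪v, w - z⟫ + η ^ 2 * ‖v‖ ^ 2 := by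
  rw [show (w - η • v) - z = (w - z) - η • v by abel, norm_sub_sq_real, real_inner_smul_right,
    norm_smul, real_inner_comm, Real.norm_eq_abs, mul_pow, sq_abs]
  ring

theorem sub_add_half_mul_sq_le_inner {f : E → ℝ} {g : E → E} {μ : ℝ}
    (hsc : ∀ u v, f v ≥ f u + ⟪g u, v - u⟫ + (μ / 2) * ‖v - u‖ ^ 2) (w z : E) :
    f w - f z + (μ / 2) * ‖w - z‖ ^ 2 ≤ ⟪g w, w - z⟫ := by
  have h := hsc w z
  rw [norm_sub_rev, ← neg_sub w z, inner_neg_right] at h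
  linarith

theorem norm_sub_smul_sub_sq_le {w v z : E} {η μ a : ℝ} (hη : 0 ≤ η)
    (hinner : a + (μ / 2) * ‖w - z‖ ^ 2 ≤ ⟪v, w - z⟫) (hgap : (η / 2) * ‖v‖ ^ 2 ≤ a) :
    ‖(w - η • v) - z‖ ^ 2 ≤ (1 - μ * η) * ‖w - z‖ ^ 2 := by
  rw [norm_sub_smul_sub_sq]
  nlinarith [mul_le_mul_of_nonneg_left (hgap.trans (le_sub_right_of_add_le hinner)) hη]

end

theorem half_mul_sq_le_of_armijo {fw fw' fstar η c n : ℝ} (hη : 0 ≤ η) (hc : 1 / 2 ≤ c)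
    (hstar : fstar ≤ fw') (harmijo : fw' ≤ fw - c * η * n ^ 2) :
    (η / 2) * n ^ 2 ≤ fw - fstar := by
  nlinarith [mul_le_mul_of_nonneg_right hc (mul_nonneg hη (sq_nonneg n))]

theorem armijo_sls_stmt4_general {d : ℕ} (f : EuclideanSpace ℝ (Fin d) → ℝ)
    (g : EuclideanSpace ℝ (Fin d) → EuclideanSpace ℝ (Fin d))
    (μ : ℝ)
    (hsc : ∀ u v, f v ≥ f u + ⟪g u, v - u⟫ + (μ / 2) * ‖v - u‖ ^ 2)
    (wstar : EuclideanSpace ℝ (Fin d)) (hmin : ∀ w, f wstar ≤ f w)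
    (w : EuclideanSpace ℝ (Fin d)) (η c : ℝ) (hη : 0 < η) (hc : (1:ℝ)/2 ≤ c)
    (harmijo : f (w - η • g w) ≤ f w - c * η * ‖g w‖ ^ 2) :
    ‖(w - η • g w) - wstar‖ ^ 2 ≤ (1 - μ * η) * ‖w - wstar‖ ^ 2 :=
  norm_sub_smul_sub_sq_le hη.le (sub_add_half_mul_sq_le_inner hsc w wstar)
    (half_mul_sq_le_of_armijo hη.le hc (hmin _) harmijo)

/-- One SGD step with Armijo line-search (c ≥ 1/2) on a μ-strongly convex
function f minimized at w* contracts the distance to w*: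
‖w⁺ - w*‖² ≤ (1 - μη)‖w - w*‖². -/
theorem armijo_sls_stmt4 {d : ℕ} (f : EuclideanSpace ℝ (Fin d) → ℝ)
    (g : EuclideanSpace ℝ (Fin d) → EuclideanSpace ℝ (Fin d))
    (μ : ℝ) (hμ : 0 ≤ μ)
    (hgrad : ∀ x, HasGradientAt f (g x) x)
    (hsc : ∀ u v, f v ≥ f u + ⟪g u, v - u⟫ + (μ / 2) * ‖v - u‖ ^ 2)
    (wstar : EuclideanSpace ℝ (Fin d)) (hmin : ∀ w, f wstar ≤ f w)
    (w : EuclideanSpace ℝ (Fin d)) (η c : ℝ) (hη : 0 < η) (hc : (1:ℝ)/2 ≤ c)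
    (harmijo : f (w - η • g w) ≤ f w - c * η * ‖g w‖ ^ 2) :
    ‖(w - η • g w) - wstar‖ ^ 2 ≤ (1 - μ * η) * ‖w - wstar‖ ^ 2 :=
  armijo_sls_stmt4_general f g μ hsc wstar hmin w η c hη hc harmijo
end

section
/- Let f_i : R^d → R be convex and differentiable, with w* a global minimizer of f_i. Consider one step w⁺ = w - η∇f_i(w) with η > 0 satisfying the Armijo condition f_i(w⁺) ≤ f_i(w) - c·η·‖∇f_i(w)‖² for some c > 1/2. Then f_i(w) - f_i(w*) ≤ (c/(2c-1))·(1/η)·(‖w - w*‖² - ‖w⁺ - w*‖²). -/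
/-!
Convexity bounds the suboptimality gap `f w - f w*` by `⟪∇f w, w - w*⟫`, while expanding the
square shows `‖w - w*‖² - ‖w⁺ - w*‖² = 2η⟪∇f w, w - w*⟫ - η²‖∇f w‖²`. The Armijo condition
together with the minimality of `w*` (`f w* ≤ f w⁺`) gives `cη‖∇f w‖² ≤ f w - f w*`, so the
negative term `η²‖∇f w‖²` costs at most a fraction `1/(2c)` of `2η(f w - f w*)`; this is where
`c > 1/2` and the constant `c / (2c - 1)` come from.
-/

open scoped RealInnerProductSpace

theorem ConvexOn.apply_sub_le_of_hasFDerivAt {E : Type*} [NormedAddCommGroup E]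
    [NormedSpace ℝ E] {s : Set E} {f : E → ℝ} {f' : E →L[ℝ] ℝ} {x y : E}
    (hf : ConvexOn ℝ s f) (hx : x ∈ s) (hy : y ∈ s) (hf' : HasFDerivAt f f' x) :
    f' (y - x) ≤ f y - f x := by
  let ℓ : ℝ →ᵃ[ℝ] E := AffineMap.lineMap x y
  have hline : ConvexOn ℝ (ℓ ⁻¹' s) (f ∘ ℓ) := hf.comp_affineMap ℓ
  have hderiv : HasDerivAt (f ∘ ℓ) (f' (y - x)) 0 := by
    have hf'0 : HasFDerivAt f f' (ℓ 0) := by rwa [AffineMap.lineMap_apply_zero]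
    exact hf'0.comp_hasDerivAt 0 AffineMap.hasDerivAt_lineMap
  have h0 : (0 : ℝ) ∈ ℓ ⁻¹' s := by
    simpa only [Set.mem_preimage, ℓ, AffineMap.lineMap_apply_zero] using hx
  have h1 : (1 : ℝ) ∈ ℓ ⁻¹' s := by
    simpa only [Set.mem_preimage, ℓ, AffineMap.lineMap_apply_one] using hy
  simpa [slope_def_field, ℓ] using hline.le_slope_of_hasDerivAt h0 h1 one_pos hderiv

theorem ConvexOn.sub_le_inner_of_hasGradientAt {F : Type*} [NormedAddCommGroup F]
    [InnerProductSpace ℝ F] [CompleteSpace F] {s : Set F} {f : F → ℝ} {G x y : F}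
    (hf : ConvexOn ℝ s f) (hx : x ∈ s) (hy : y ∈ s) (hG : HasGradientAt f G x) :
    f x - f y ≤ ⟪G, x - y⟫ := by
  have h := hf.apply_sub_le_of_hasFDerivAt hx hy hG.hasFDerivAt
  rw [InnerProductSpace.toDual_apply_apply, ← neg_sub x y, inner_neg_right] at h
  linarith

theorem norm_sub_smul_sub_sq_s5 {F : Type*} [NormedAddCommGroup F] [InnerProductSpace ℝ F]
    (x v G : F) (η : ℝ) :
    ‖x - η • G - v‖ ^ 2 = ‖x - v‖ ^ 2 - 2 * η * ⟪G, x - v⟫ + η ^ 2 * ‖G‖ ^ 2 := by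
  rw [sub_right_comm, norm_sub_sq_real, real_inner_smul_right, norm_smul, real_inner_comm,
    mul_pow, Real.norm_eq_abs, sq_abs]
  ring

/-- One SGD step with Armijo line-search (c > 1/2) on a convex function f
minimized at w* satisfies
f(w) - f(w*) ≤ (c/(2c-1))·(1/η)·(‖w - w*‖² - ‖w⁺ - w*‖²). -/
theorem armijo_sls_stmt5 {d : ℕ} (f : EuclideanSpace ℝ (Fin d) → ℝ)
    (g : EuclideanSpace ℝ (Fin d) → EuclideanSpace ℝ (Fin d))
    (hgrad : ∀ x, HasGradientAt f (g x) x)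
    (hconv : ConvexOn ℝ Set.univ f)
    (wstar : EuclideanSpace ℝ (Fin d)) (hmin : ∀ w, f wstar ≤ f w)
    (w : EuclideanSpace ℝ (Fin d)) (η c : ℝ) (hη : 0 < η) (hc : (1:ℝ)/2 < c)
    (harmijo : f (w - η • g w) ≤ f w - c * η * ‖g w‖ ^ 2) :
    f w - f wstar ≤
      (c / (2 * c - 1)) * (1 / η) *
        (‖w - wstar‖ ^ 2 - ‖(w - η • g w) - wstar‖ ^ 2) := by
  have hgap_le_inner : f w - f wstar ≤ ⟪g w, w - wstar⟫ :=
    hconv.sub_le_inner_of_hasGradientAt trivial trivial (hgrad w)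
  have hdecrease_le_gap : c * η * ‖g w‖ ^ 2 ≤ f w - f wstar := by
    linarith [hmin (w - η • g w)]
  have hscaled_gap : (2 * c - 1) * η * (f w - f wstar) ≤
      c * (2 * η * ⟪g w, w - wstar⟫ - η ^ 2 * ‖g w‖ ^ 2) := by
    nlinarith [mul_le_mul_of_nonneg_left hgap_le_inner hη.le,
      mul_le_mul_of_nonneg_left hdecrease_le_gap hη.le]
  have hscale : 0 < (2 * c - 1) * η := mul_pos (by linarith) hη
  rw [norm_sub_smul_sub_sq_s5]
  calc f w - f wstar
      ≤ c * (2 * η * ⟪g w, w - wstar⟫ - η ^ 2 * ‖g w‖ ^ 2) / ((2 * c - 1) * η) := by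
        rwa [le_div_iff₀ hscale, mul_comm]
    _ = c / (2 * c - 1) * (1 / η) * (‖w - wstar‖ ^ 2 -
          (‖w - wstar‖ ^ 2 - 2 * η * ⟪g w, w - wstar⟫ + η ^ 2 * ‖g w‖ ^ 2)) := by
        field_simp
        ring
end

section
/- Let g = ∇f_i for a differentiable f_i : R^d → R satisfying the restricted secant inequality ⟨g(w), w - w*⟩ ≥ μ‖w - w*‖² for all w (with μ > 0), and suppose g is L-Lipschitz. With the extragradient step w' = w - ηg(w), w⁺ = w - ηg(w'), where 0 < η ≤ 1/(4L) and μ ≤ L, it holds that ‖w⁺ - w*‖² ≤ (1 - ημ)‖w - w*‖². -/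
/-!
Expand the extragradient step as
`‖w⁺ - x‖² = ‖w - x‖² - ‖w' - w‖² + η²‖g w' - g w‖² - 2η⟪g w', w' - x⟫`.
The restricted secant inequality at `w'` controls the last term by `-2ημ‖w' - x‖²`, and
`‖w - x‖² ≤ 2‖w - w'‖² + 2‖w' - x‖²` trades this for `-ημ‖w - x‖² + 2ημ‖w' - w‖²`.
Lipschitzness bounds `‖g w' - g w‖` by `L‖w' - w‖`, so what is left is
`(η²L² + 2ημ - 1)‖w' - w‖²`, which is nonpositive for small steps.
-/

open scoped RealInnerProductSpace

section Extragradient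

variable {E : Type*} [NormedAddCommGroup E]

theorem sq_norm_le_two_mul_sq_norm_sub_add (a b : E) :
    ‖a‖ ^ 2 ≤ 2 * (‖a - b‖ ^ 2 + ‖b‖ ^ 2) :=
  (pow_le_pow_left₀ (norm_nonneg a) (norm_le_norm_sub_add a b) 2).trans add_sq_le

variable [InnerProductSpace ℝ E]

theorem norm_extragradient_sub_sq (x w u v : E) (η : ℝ) :
    ‖w - η • v - x‖ ^ 2 = ‖w - x‖ ^ 2 - ‖(w - η • u) - w‖ ^ 2 + η ^ 2 * ‖v - u‖ ^ 2
      - 2 * η * ⟪v, (w - η • u) - x⟫ := by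
  rw [show w - η • v - x = (w - x) - η • v by abel, show (w - η • u) - w = -(η • u) by abel,
    show (w - η • u) - x = (w - x) - η • u by abel]
  generalize w - x = a
  rw [norm_neg, norm_sub_sq_real, norm_sub_sq_real, norm_smul, norm_smul, inner_sub_right,
    real_inner_smul_right, real_inner_smul_right, real_inner_comm a v, Real.norm_eq_abs,
    mul_pow, mul_pow, sq_abs]
  ring

theorem extragradient_sq_dist_le (g : E → E) {x w w' : E} {η μ L : ℝ}
    (hw' : w' = w - η • g w) (hη : 0 ≤ η) (hμ : 0 ≤ μ)
    (hstep : (η * L) ^ 2 + 2 * η * μ ≤ 1)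
    (hlip : ‖g w' - g w‖ ≤ L * ‖w' - w‖)
    (hRSI : μ * ‖w' - x‖ ^ 2 ≤ ⟪g w', w' - x⟫) :
    ‖w - η • g w' - x‖ ^ 2 ≤ (1 - η * μ) * ‖w - x‖ ^ 2 := by
  have hexpand := norm_extragradient_sub_sq x w (g w) (g w') η
  rw [← hw'] at hexpand
  have hlip_sq : ‖g w' - g w‖ ^ 2 ≤ L ^ 2 * ‖w' - w‖ ^ 2 := by
    rw [← mul_pow]; exact pow_le_pow_left₀ (norm_nonneg _) hlip 2
  have hyoung : ‖w - x‖ ^ 2 ≤ 2 * (‖w' - w‖ ^ 2 + ‖w' - x‖ ^ 2) := by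
    simpa only [norm_sub_rev w w', sub_sub_sub_cancel_right] using
      sq_norm_le_two_mul_sq_norm_sub_add (w - x) (w' - x)
  have hcoef : ((η * L) ^ 2 + 2 * η * μ - 1) * ‖w' - w‖ ^ 2 ≤ 0 :=
    mul_nonpos_of_nonpos_of_nonneg (by linarith) (sq_nonneg _)
  have hημ : 0 ≤ η * μ := mul_nonneg hη hμ
  nlinarith [mul_le_mul_of_nonneg_left hlip_sq (sq_nonneg η),
    mul_le_mul_of_nonneg_left hRSI (by positivity : (0 : ℝ) ≤ 2 * η),
    mul_le_mul_of_nonneg_left hyoung hημ]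

end Extragradient

theorem armijo_sls_stmt10_general {d : ℕ}
    (g : EuclideanSpace ℝ (Fin d) → EuclideanSpace ℝ (Fin d))
    (μ L : ℝ) (hμ : 0 < μ) (hL : 0 < L) (hμL : μ ≤ L)
    (hlip : ∀ u v, ‖g u - g v‖ ≤ L * ‖u - v‖)
    (wstar : EuclideanSpace ℝ (Fin d))
    (hRSI : ∀ w, ⟪g w, w - wstar⟫ ≥ μ * ‖w - wstar‖ ^ 2)
    (w : EuclideanSpace ℝ (Fin d)) (η : ℝ) (hη : 0 < η) (hηle : η ≤ 1 / (4 * L)) :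
    ‖(w - η • g (w - η • g w)) - wstar‖ ^ 2 ≤ (1 - η * μ) * ‖w - wstar‖ ^ 2 := by
  have hηL : η * L ≤ 1 / 4 := by
    rw [le_div_iff₀ (by positivity)] at hηle; linarith
  have hημ : η * μ ≤ 1 / 4 := (mul_le_mul_of_nonneg_left hμL hη.le).trans hηL
  have hstep : (η * L) ^ 2 + 2 * η * μ ≤ 1 := by
    nlinarith [mul_pos hη hL]
  exact extragradient_sq_dist_le g rfl hη.le hμ.le hstep (hlip _ _) (hRSI _)

/-- Extragradient step on a function satisfying RSI with L-Lipschitz gradient: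
if 0 < η ≤ 1/(4L) and μ ≤ L, then ‖w⁺ - w*‖² ≤ (1 - ημ)‖w - w*‖². -/
theorem armijo_sls_stmt10 {d : ℕ} (f : EuclideanSpace ℝ (Fin d) → ℝ)
    (g : EuclideanSpace ℝ (Fin d) → EuclideanSpace ℝ (Fin d))
    (μ L : ℝ) (hμ : 0 < μ) (hL : 0 < L) (hμL : μ ≤ L)
    (hgrad : ∀ x, HasGradientAt f (g x) x)
    (hlip : ∀ u v, ‖g u - g v‖ ≤ L * ‖u - v‖)
    (wstar : EuclideanSpace ℝ (Fin d))
    (hRSI : ∀ w, ⟪g w, w - wstar⟫ ≥ μ * ‖w - wstar‖ ^ 2)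
    (w : EuclideanSpace ℝ (Fin d)) (η : ℝ) (hη : 0 < η) (hηle : η ≤ 1 / (4 * L)) :
    ‖(w - η • g (w - η • g w)) - wstar‖ ^ 2 ≤ (1 - η * μ) * ‖w - wstar‖ ^ 2 :=
  armijo_sls_stmt10_general g μ L hμ hL hμL hlip wstar hRSI w η hη hηle
end

section
/- Let g : R^d → R^d and suppose the Lipschitz line-search condition ‖g(w - ηg(w)) - g(w)‖ ≤ c‖g(w)‖ holds at w with constants c ∈ (0, 1/√2] and η > 0. Let f be convex, differentiable with gradient g, minimized at w* with g(w*) = 0. Then with the extragradient step w' = w - ηg(w), w⁺ = w - ηg(w'), one has (η/2)(f(w) - f(w*)) ≤ ‖w - w*‖² - ‖w⁺ - w*‖². -/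
open scoped RealInnerProductSpace

/-!
Write `u = g w`, `v = g w'` with
`w' = w - η u`. Expanding the square gives
`‖w - w*‖² - ‖w⁺ - w*‖² = 2η⟪v, w' - w*⟫ + η²‖u‖² - η²‖v - u‖²`.
Convexity at `w'` bounds `⟪v, w' - w*⟫` below by `f w' - f w* ≥ 0`, the line-search condition
with `c² ≤ 1/2` gives `η²‖v - u‖² ≤ η²‖u‖²/2`, and convexity at `w` gives
`f w - f w' ≤ η‖u‖²`; together the right-hand side is at least `(η/2)(f w - f w*)`.
-/

theorem ConvexOn.add_fderiv_sub_le {E : Type*} [NormedAddCommGroup E] [NormedSpace ℝ E]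
    {s : Set E} {f : E → ℝ} {f' : E →L[ℝ] ℝ} {x y : E} (hf : ConvexOn ℝ s f)
    (hx : x ∈ s) (hy : y ∈ s) (hf' : HasFDerivAt f f' x) :
    f x + f' (y - x) ≤ f y := by
  let ℓ : ℝ →ᵃ[ℝ] E := AffineMap.lineMap x y
  have hline : ConvexOn ℝ (ℓ ⁻¹' s) (f ∘ ℓ) := hf.comp_affineMap ℓ
  have hderiv : HasDerivAt (f ∘ ℓ) (f' (y - x)) 0 := by
    have hf0 : HasFDerivAt f f' (ℓ 0) := by simpa [ℓ] using hf'
    exact hf0.comp_hasDerivAt 0 AffineMap.hasDerivAt_lineMap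
  have hslope := hline.le_slope_of_hasDerivAt (by simpa [ℓ] using hx) (by simpa [ℓ] using hy)
    zero_lt_one hderiv
  simp only [ℓ, slope_def_field, Function.comp_apply, AffineMap.lineMap_apply_zero,
    AffineMap.lineMap_apply_one, sub_zero, div_one] at hslope
  linarith

theorem ConvexOn.add_inner_gradient_sub_le {E : Type*} [NormedAddCommGroup E]
    [InnerProductSpace ℝ E] [CompleteSpace E] {s : Set E} {f : E → ℝ} {g x y : E}
    (hf : ConvexOn ℝ s f) (hx : x ∈ s) (hy : y ∈ s) (hg : HasGradientAt f g x) :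
    f x + ⟪g, y - x⟫ ≤ f y :=
  hf.add_fderiv_sub_le hx hy hg

theorem two_mul_inner_extragradient_eq {E : Type*} [NormedAddCommGroup E]
    [InnerProductSpace ℝ E] (w z u v : E) (η : ℝ) :
    2 * η * ⟪v, w - η • u - z⟫ =
      ‖w - z‖ ^ 2 - η ^ 2 * ‖u‖ ^ 2 + η ^ 2 * ‖v - u‖ ^ 2 - ‖w - η • v - z‖ ^ 2 := by
  have hplus : w - η • v - z = (w - z) - η • v := by abel
  have hmid : w - η • u - z = (w - z) - η • u := by abel
  rw [hplus, hmid]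
  simp only [norm_sub_sq_real, inner_sub_right, inner_smul_right, norm_smul, mul_pow,
    Real.norm_eq_abs, sq_abs, real_inner_comm (w - z) v, real_inner_comm u v]
  ring

theorem sq_le_half_sq_of_le_mul {a b c : ℝ} (hb : 0 ≤ b) (hc : c ≤ 1 / Real.sqrt 2)
    (ha : 0 ≤ a) (hab : a ≤ c * b) : a ^ 2 ≤ b ^ 2 / 2 := by
  have hle : a ≤ b / Real.sqrt 2 := by
    calc a ≤ c * b := hab
      _ ≤ 1 / Real.sqrt 2 * b := mul_le_mul_of_nonneg_right hc hb
      _ = b / Real.sqrt 2 := by ring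
  calc a ^ 2 ≤ (b / Real.sqrt 2) ^ 2 := pow_le_pow_left₀ ha hle 2
    _ = b ^ 2 / 2 := by rw [div_pow, Real.sq_sqrt zero_le_two]

theorem armijo_sls_stmt12_general {d : ℕ} (f : EuclideanSpace ℝ (Fin d) → ℝ)
    (g : EuclideanSpace ℝ (Fin d) → EuclideanSpace ℝ (Fin d))
    (hgrad : ∀ x, HasGradientAt f (g x) x)
    (hconv : ConvexOn ℝ Set.univ f)
    (wstar : EuclideanSpace ℝ (Fin d))
    (hmin : ∀ w, f wstar ≤ f w)
    (w : EuclideanSpace ℝ (Fin d)) (η c : ℝ) (hη : 0 < η)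
    (hc : c ≤ 1 / Real.sqrt 2)
    (hls : ‖g (w - η • g w) - g w‖ ≤ c * ‖g w‖) :
    (η / 2) * (f w - f wstar) ≤
      ‖w - wstar‖ ^ 2 - ‖(w - η • g (w - η • g w)) - wstar‖ ^ 2 := by
  set w' := w - η • g w with hw'
  have hlip : ‖g w' - g w‖ ^ 2 ≤ ‖g w‖ ^ 2 / 2 :=
    sq_le_half_sq_of_le_mul (norm_nonneg _) hc (norm_nonneg _) hls
  have hdescent : f w ≤ f w' + η * ‖g w‖ ^ 2 := by
    have h := hconv.add_inner_gradient_sub_le trivial trivial (hgrad w) (y := w')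
    rw [hw', sub_sub_cancel_left, inner_neg_right, real_inner_smul_right,
      real_inner_self_eq_norm_sq] at h
    linarith
  have hgap : f w' - f wstar ≤ ⟪g w', w' - wstar⟫ := by
    have h := hconv.add_inner_gradient_sub_le trivial trivial (hgrad w') (y := wstar)
    rw [← neg_sub, inner_neg_right] at h
    linarith
  have hid := two_mul_inner_extragradient_eq w wstar (g w) (g w') η
  nlinarith [hmin w', mul_le_mul_of_nonneg_left hgap hη.le,
    mul_le_mul_of_nonneg_left hlip (sq_nonneg η)]

/-- SEG with Lipschitz line-search (c ≤ 1/√2) on a convex function f with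
minimizer w*: (η/2)(f(w) - f(w*)) ≤ ‖w - w*‖² - ‖w⁺ - w*‖². -/
theorem armijo_sls_stmt12 {d : ℕ} (f : EuclideanSpace ℝ (Fin d) → ℝ)
    (g : EuclideanSpace ℝ (Fin d) → EuclideanSpace ℝ (Fin d))
    (hgrad : ∀ x, HasGradientAt f (g x) x)
    (hconv : ConvexOn ℝ Set.univ f)
    (wstar : EuclideanSpace ℝ (Fin d))
    (hmin : ∀ w, f wstar ≤ f w) (hstat : g wstar = 0)
    (w : EuclideanSpace ℝ (Fin d)) (η c : ℝ) (hη : 0 < η)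
    (hc0 : 0 < c) (hc : c ≤ 1 / Real.sqrt 2)
    (hls : ‖g (w - η • g w) - g w‖ ≤ c * ‖g w‖) :
    (η / 2) * (f w - f wstar) ≤
      ‖w - wstar‖ ^ 2 - ‖(w - η • g (w - η • g w)) - wstar‖ ^ 2 :=
  armijo_sls_stmt12_general f g hgrad hconv wstar hmin w η c hη hc hls
end

section
/- Let A ∈ R^{m×n}, and consider the bilinear operator updates x⁺ = x - ηA(y + ηAᵀx), y⁺ = y + ηAᵀ(x - ηAy). Then ‖x⁺‖² + ‖y⁺‖² = ‖x‖² + ‖y‖² - η²(xᵀAAᵀx + yᵀAᵀAy) + η⁴(xᵀ(AAᵀ)²x + yᵀ(AᵀA)²y). -/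
/-!
Write `z = (x, y)` and `M = [[0, A], [-Aᵀ, 0]]`; the update is the extragradient step
`z⁺ = z - η M (z - η M z) = z - η M z + η² M² z`. Since `M` is alternating (`⟪w, M w⟫ = 0`),
expanding `‖z⁺‖²` kills the terms of odd order in `η`, and `⟪z, M² z⟫ = -‖M z‖²` turns the
`η²` terms into `-η² ‖M z‖²`, leaving `‖z‖² - η² ‖M z‖² + η⁴ ‖M² z‖²`.
-/

open Matrix

variable {R : Type*} [CommRing R]

theorem mulVec_dotProduct_mulVec {m n : Type*} [Fintype m] [Fintype n] (A : Matrix m n R)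
    (u v : n → R) : A *ᵥ u ⬝ᵥ A *ᵥ v = u ⬝ᵥ Aᵀ *ᵥ (A *ᵥ v) := by
  rw [dotProduct_transpose_mulVec, dotProduct_comm]

section Extragradient

variable {ι : Type*} [Fintype ι]

def extragradientStep (M : Matrix ι ι R) (η : R) (z : ι → R) : ι → R :=
  z - η • M *ᵥ (z - η • M *ᵥ z)

theorem dotProduct_mulVec_eq_neg_of_alternating {M : Matrix ι ι R}
    (hM : ∀ w, w ⬝ᵥ M *ᵥ w = 0) (u w : ι → R) : u ⬝ᵥ M *ᵥ w = -(M *ᵥ u ⬝ᵥ w) := by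
  have h := hM (u + w)
  simp only [mulVec_add, dotProduct_add, add_dotProduct, hM u, hM w] at h
  rw [dotProduct_comm (M *ᵥ u)]
  linear_combination h

theorem extragradientStep_dotProduct_self {M : Matrix ι ι R} (hM : ∀ w, w ⬝ᵥ M *ᵥ w = 0)
    (η : R) (z : ι → R) :
    extragradientStep M η z ⬝ᵥ extragradientStep M η z =
      z ⬝ᵥ z - η ^ 2 * (M *ᵥ z ⬝ᵥ M *ᵥ z) + η ^ 4 * (M *ᵥ M *ᵥ z ⬝ᵥ M *ᵥ M *ᵥ z) := by
  set v := M *ᵥ z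
  set w := M *ᵥ v
  have hzw : z ⬝ᵥ w = -(v ⬝ᵥ v) := dotProduct_mulVec_eq_neg_of_alternating hM z v
  have hzv : z ⬝ᵥ v = 0 := hM z
  have hvw : v ⬝ᵥ w = 0 := hM v
  simp only [extragradientStep, mulVec_sub, mulVec_smul, sub_dotProduct, dotProduct_sub,
    smul_dotProduct, dotProduct_smul, smul_eq_mul]
  rw [dotProduct_comm v z, dotProduct_comm w z, dotProduct_comm w v, hzw, hzv, hvw]
  ring

end Extragradient

section BilinearGame

variable {m n : Type*} [Fintype m] [Fintype n]

def bilinearGameMatrix (A : Matrix m n R) : Matrix (m ⊕ n) (m ⊕ n) R :=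
  fromBlocks 0 A (-Aᵀ) 0

theorem bilinearGameMatrix_mulVec_sumElim (A : Matrix m n R) (x : m → R) (y : n → R) :
    bilinearGameMatrix A *ᵥ (x ⊕ᵥ y) = A *ᵥ y ⊕ᵥ -(Aᵀ *ᵥ x) := by
  simp [bilinearGameMatrix, fromBlocks_mulVec, neg_mulVec]

theorem bilinearGameMatrix_alternating (A : Matrix m n R) (w : m ⊕ n → R) :
    w ⬝ᵥ bilinearGameMatrix A *ᵥ w = 0 := by
  rw [← Sum.elim_comp_inl_inr w, bilinearGameMatrix_mulVec_sumElim, sumElim_dotProduct_sumElim,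
    dotProduct_neg, dotProduct_transpose_mulVec, add_neg_cancel]

theorem extragradientStep_bilinearGameMatrix (A : Matrix m n R) (η : R) (x : m → R)
    (y : n → R) :
    extragradientStep (bilinearGameMatrix A) η (x ⊕ᵥ y) =
      (x - η • A *ᵥ (y + η • Aᵀ *ᵥ x)) ⊕ᵥ (y + η • Aᵀ *ᵥ (x - η • A *ᵥ y)) := by
  ext (i | j) <;>
    simp only [extragradientStep, bilinearGameMatrix_mulVec_sumElim, mulVec_sub, mulVec_add,
      mulVec_smul, mulVec_neg, Pi.sub_apply, Pi.add_apply, Pi.neg_apply, Pi.smul_apply,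
      Sum.elim_inl, Sum.elim_inr, smul_eq_mul] <;>
    ring

theorem bilinearGameMatrix_mulVec_dotProduct_self (A : Matrix m n R) (x : m → R) (y : n → R) :
    bilinearGameMatrix A *ᵥ (x ⊕ᵥ y) ⬝ᵥ bilinearGameMatrix A *ᵥ (x ⊕ᵥ y) =
      x ⬝ᵥ A *ᵥ (Aᵀ *ᵥ x) + y ⬝ᵥ Aᵀ *ᵥ (A *ᵥ y) := by
  rw [bilinearGameMatrix_mulVec_sumElim, sumElim_dotProduct_sumElim, neg_dotProduct_neg,
    mulVec_dotProduct_mulVec A, mulVec_dotProduct_mulVec Aᵀ, transpose_transpose, add_comm]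

theorem bilinearGameMatrix_mulVec_mulVec_dotProduct_self (A : Matrix m n R) (x : m → R)
    (y : n → R) :
    bilinearGameMatrix A *ᵥ bilinearGameMatrix A *ᵥ (x ⊕ᵥ y) ⬝ᵥ
        bilinearGameMatrix A *ᵥ bilinearGameMatrix A *ᵥ (x ⊕ᵥ y) =
      x ⬝ᵥ A *ᵥ (Aᵀ *ᵥ (A *ᵥ (Aᵀ *ᵥ x))) + y ⬝ᵥ Aᵀ *ᵥ (A *ᵥ (Aᵀ *ᵥ (A *ᵥ y))) := by
  rw [bilinearGameMatrix_mulVec_sumElim, bilinearGameMatrix_mulVec_sumElim,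
    sumElim_dotProduct_sumElim, mulVec_neg, neg_dotProduct_neg, neg_dotProduct_neg,
    mulVec_dotProduct_mulVec A, mulVec_dotProduct_mulVec Aᵀ, transpose_transpose,
    mulVec_dotProduct_mulVec Aᵀ, transpose_transpose, mulVec_dotProduct_mulVec A, add_comm]

end BilinearGame

/-- One-step energy identity for extragradient on the bilinear problem:
‖x⁺‖² + ‖y⁺‖² = ‖x‖² + ‖y‖² - η²(xᵀAAᵀx + yᵀAᵀAy)
              + η⁴(xᵀ(AAᵀ)²x + yᵀ(AᵀA)²y). -/
theorem armijo_sls_stmt13 {m n : ℕ} (A : Matrix (Fin m) (Fin n) ℝ)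
    (x : Fin m → ℝ) (y : Fin n → ℝ) (η : ℝ)
    (x' : Fin m → ℝ) (y' : Fin n → ℝ)
    (hx' : x' = x - η • A.mulVec (y + η • Aᵀ.mulVec x))
    (hy' : y' = y + η • Aᵀ.mulVec (x - η • A.mulVec y)) :
    x' ⬝ᵥ x' + y' ⬝ᵥ y' =
      x ⬝ᵥ x + y ⬝ᵥ y
        - η ^ 2 * (x ⬝ᵥ A.mulVec (Aᵀ.mulVec x) + y ⬝ᵥ Aᵀ.mulVec (A.mulVec y))
        + η ^ 4 * (x ⬝ᵥ A.mulVec (Aᵀ.mulVec (A.mulVec (Aᵀ.mulVec x)))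
                  + y ⬝ᵥ Aᵀ.mulVec (A.mulVec (Aᵀ.mulVec (A.mulVec y)))) := by
  calc x' ⬝ᵥ x' + y' ⬝ᵥ y' = (x' ⊕ᵥ y') ⬝ᵥ (x' ⊕ᵥ y') :=
        (sumElim_dotProduct_sumElim _ _ _ _).symm
    _ = extragradientStep (bilinearGameMatrix A) η (x ⊕ᵥ y) ⬝ᵥ
          extragradientStep (bilinearGameMatrix A) η (x ⊕ᵥ y) := by
      rw [extragradientStep_bilinearGameMatrix, hx', hy']
    _ = _ := by
      rw [extragradientStep_dotProduct_self (bilinearGameMatrix_alternating A),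
        sumElim_dotProduct_sumElim, bilinearGameMatrix_mulVec_dotProduct_self,
        bilinearGameMatrix_mulVec_mulVec_dotProduct_self]
end

section
/- Let A ∈ R^{m×n}, x ∈ R^m, y ∈ R^n, η > 0, and c ∈ (0,1) satisfy η²(xᵀ(AAᵀ)²x + yᵀ(AᵀA)²y) ≤ c²(xᵀAAᵀx + yᵀAᵀAy). Then with x⁺ = x - ηA(y + ηAᵀx) and y⁺ = y + ηAᵀ(x - ηAy), it holds that ‖x⁺‖² + ‖y⁺‖² ≤ ‖x‖² + ‖y‖² - η²(1 - c²)(xᵀAAᵀx + yᵀAᵀAy). -/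
/-!
Writing `a = A y`, `b = Aᵀ x`, the step is `x⁺ = x - η a - η² A b`, `y⁺ = y + η b - η² Aᵀ a`.
Expanding `‖x⁺‖² + ‖y⁺‖²`, the terms of odd order in `η` cancel in pairs by the adjoint relation
`⟨u, A v⟩ = ⟨Aᵀ u, v⟩`, which leaves the exact identity
`‖x⁺‖² + ‖y⁺‖² = ‖x‖² + ‖y‖² - η² Q₂ + η⁴ Q₄` with `Q₂ = ‖Aᵀ x‖² + ‖A y‖²`, `Q₄ = ‖AAᵀx‖² + ‖AᵀAy‖²`.
The line-search hypothesis, multiplied by `η²`, bounds `η⁴ Q₄` by `η² c² Q₂`.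
-/

open Matrix

section

variable {R ι κ : Type*} [CommRing R] [Fintype ι] [Fintype κ]

lemma dotProduct_mulVec_eq_transpose_mulVec_dotProduct (A : Matrix ι κ R) (u : ι → R)
    (v : κ → R) : u ⬝ᵥ A *ᵥ v = Aᵀ *ᵥ u ⬝ᵥ v := by
  rw [← dotProduct_transpose_mulVec, dotProduct_comm]

lemma dotProduct_mulVec_transpose_mulVec (A : Matrix ι κ R) (u v : ι → R) :
    u ⬝ᵥ A *ᵥ Aᵀ *ᵥ v = Aᵀ *ᵥ u ⬝ᵥ Aᵀ *ᵥ v :=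
  dotProduct_mulVec_eq_transpose_mulVec_dotProduct A u _

lemma dotProduct_transpose_mulVec_mulVec (A : Matrix ι κ R) (u v : κ → R) :
    u ⬝ᵥ Aᵀ *ᵥ A *ᵥ v = A *ᵥ u ⬝ᵥ A *ᵥ v := by
  simpa using dotProduct_mulVec_transpose_mulVec Aᵀ u v

theorem extragradient_energy_eq (A : Matrix ι κ R) (x : ι → R) (y : κ → R) (η : R) :
    let x' := x - η • A *ᵥ (y + η • Aᵀ *ᵥ x)
    let y' := y + η • Aᵀ *ᵥ (x - η • A *ᵥ y)
    x' ⬝ᵥ x' + y' ⬝ᵥ y' =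
      x ⬝ᵥ x + y ⬝ᵥ y - η ^ 2 * (x ⬝ᵥ A *ᵥ Aᵀ *ᵥ x + y ⬝ᵥ Aᵀ *ᵥ A *ᵥ y)
        + η ^ 4 * (x ⬝ᵥ A *ᵥ Aᵀ *ᵥ A *ᵥ Aᵀ *ᵥ x + y ⬝ᵥ Aᵀ *ᵥ A *ᵥ Aᵀ *ᵥ A *ᵥ y) := by
  intro x' y'
  set a := A *ᵥ y
  set b := Aᵀ *ᵥ x
  set p := A *ᵥ b
  set q := Aᵀ *ᵥ a
  have hx' : x' = x - η • a - η ^ 2 • p := by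
    simp only [x', mulVec_add, mulVec_smul]; module
  have hy' : y' = y + η • b - η ^ 2 • q := by
    simp only [y', mulVec_sub, mulVec_smul]; module
  have hxa : x ⬝ᵥ a = y ⬝ᵥ b := by
    rw [dotProduct_mulVec_eq_transpose_mulVec_dotProduct, dotProduct_comm]
  have hap : a ⬝ᵥ p = b ⬝ᵥ q := by
    rw [dotProduct_mulVec_eq_transpose_mulVec_dotProduct, dotProduct_comm]
  have hxp : x ⬝ᵥ p = b ⬝ᵥ b := dotProduct_mulVec_transpose_mulVec A x x
  have hyq : y ⬝ᵥ q = a ⬝ᵥ a := dotProduct_transpose_mulVec_mulVec A y y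
  have hpp : x ⬝ᵥ A *ᵥ Aᵀ *ᵥ p = p ⬝ᵥ p := by
    rw [dotProduct_mulVec_transpose_mulVec, dotProduct_transpose_mulVec_mulVec]
  have hqq : y ⬝ᵥ Aᵀ *ᵥ A *ᵥ q = q ⬝ᵥ q := by
    rw [dotProduct_transpose_mulVec_mulVec, dotProduct_mulVec_transpose_mulVec]
  rw [hx', hy', hpp, hqq]
  simp only [dotProduct_sub, sub_dotProduct, dotProduct_add, add_dotProduct,
    dotProduct_smul, smul_dotProduct, smul_eq_mul, dotProduct_comm _ x, dotProduct_comm _ y,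
    dotProduct_comm p a, dotProduct_comm q b]
  linear_combination (-2 * η) * hxa - η ^ 2 * (hxp + hyq) + 2 * η ^ 3 * hap

end

theorem armijo_sls_stmt14_general {m n : ℕ} (A : Matrix (Fin m) (Fin n) ℝ)
    (x : Fin m → ℝ) (y : Fin n → ℝ) (η c : ℝ)
    (hls : η ^ 2 * (x ⬝ᵥ A.mulVec (Aᵀ.mulVec (A.mulVec (Aᵀ.mulVec x)))
              + y ⬝ᵥ Aᵀ.mulVec (A.mulVec (Aᵀ.mulVec (A.mulVec y)))) ≤
           c ^ 2 * (x ⬝ᵥ A.mulVec (Aᵀ.mulVec x) + y ⬝ᵥ Aᵀ.mulVec (A.mulVec y)))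
    (x' : Fin m → ℝ) (y' : Fin n → ℝ)
    (hx' : x' = x - η • A.mulVec (y + η • Aᵀ.mulVec x))
    (hy' : y' = y + η • Aᵀ.mulVec (x - η • A.mulVec y)) :
    x' ⬝ᵥ x' + y' ⬝ᵥ y' ≤
      x ⬝ᵥ x + y ⬝ᵥ y
        - η ^ 2 * (1 - c ^ 2) *
            (x ⬝ᵥ A.mulVec (Aᵀ.mulVec x) + y ⬝ᵥ Aᵀ.mulVec (A.mulVec y)) := by
  subst hx' hy'
  rw [extragradient_energy_eq]
  linear_combination η ^ 2 * hls

/-- Under the Lipschitz line-search hypothesis, the extragradient step on the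
bilinear problem contracts the energy:
‖x⁺‖² + ‖y⁺‖² ≤ ‖x‖² + ‖y‖² - η²(1 - c²)(xᵀAAᵀx + yᵀAᵀAy). -/
theorem armijo_sls_stmt14 {m n : ℕ} (A : Matrix (Fin m) (Fin n) ℝ)
    (x : Fin m → ℝ) (y : Fin n → ℝ) (η c : ℝ)
    (hη : 0 < η) (hc0 : 0 < c) (hc1 : c < 1)
    (hls : η ^ 2 * (x ⬝ᵥ A.mulVec (Aᵀ.mulVec (A.mulVec (Aᵀ.mulVec x)))
              + y ⬝ᵥ Aᵀ.mulVec (A.mulVec (Aᵀ.mulVec (A.mulVec y)))) ≤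
           c ^ 2 * (x ⬝ᵥ A.mulVec (Aᵀ.mulVec x) + y ⬝ᵥ Aᵀ.mulVec (A.mulVec y)))
    (x' : Fin m → ℝ) (y' : Fin n → ℝ)
    (hx' : x' = x - η • A.mulVec (y + η • Aᵀ.mulVec x))
    (hy' : y' = y + η • Aᵀ.mulVec (x - η • A.mulVec y)) :
    x' ⬝ᵥ x' + y' ⬝ᵥ y' ≤
      x ⬝ᵥ x + y ⬝ᵥ y
        - η ^ 2 * (1 - c ^ 2) *
            (x ⬝ᵥ A.mulVec (Aᵀ.mulVec x) + y ⬝ᵥ Aᵀ.mulVec (A.mulVec y)) :=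
  armijo_sls_stmt14_general A x y η c hls x' y' hx' hy'
end
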